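/- arXiv:1212.1941 — 4 statements merged into one kernel-verified Lean document; each statement's English description precedes it below -/
import Mathlib

section
/- Let n and l be positive natural numbers and let x, y : Fin n → ZMod 2 with x ≠ y. Then the number of tuples R : Fin l → (Fin n → ZMod 2) such that ⟨x, R j⟩ = ⟨y, R j⟩ for every j : Fin l is exactly 2^((n-1)*l). (Equivalently, if l independent uniformly random vectors r₁, …, r_l are used as checksums, the probability that a fixed pair of distinct blocks has all l pairs of inner-product checksums equal is exactly 2^(−l).) -/
lemma zmod2_ne_zero : ∀ a : ZMod 2, a ≠ 0 → a = 1 := by decide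

lemma single_count (n : ℕ) (hn : 0 < n) (z : Fin n → ZMod 2) (hz : z ≠ 0) :
    (Finset.univ.filter (fun r : Fin n → ZMod 2 => ∑ k, z k * r k = 0)).card
      = 2 ^ (n - 1) := by
  obtain ⟨i, hi⟩ : ∃ i, z i ≠ 0 := by
    by_contra h; push_neg at h; exact hz (funext h)
  have hzi : z i = 1 := zmod2_ne_zero _ hi
  set e : Fin n → ZMod 2 := Pi.single i 1 with he
  set S0 := Finset.univ.filter (fun r : Fin n → ZMod 2 => ∑ k, z k * r k = 0) with hS0
  set S1 := Finset.univ.filter (fun r : Fin n → ZMod 2 => ¬ ∑ k, z k * r k = 0) with hS1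
  have key : ∀ r : Fin n → ZMod 2,
      ∑ k, z k * (r + e) k = (∑ k, z k * r k) + 1 := by
    intro r
    have h1 : ∀ k, z k * (r + e) k = z k * r k + (if k = i then z i else 0) := by
      intro k
      by_cases h : k = i <;> simp [h, he, mul_add]
    rw [Finset.sum_congr rfl (fun k _ => h1 k), Finset.sum_add_distrib]
    simp [hzi]
  have hinv : ∀ r : Fin n → ZMod 2, r + e + e = r := by
    have h2 : (1 : ZMod 2) + 1 = 0 := by decide
    intro r; funext k; by_cases h : k = i <;> simp [he, h]
    rw [add_assoc, h2, add_zero]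
  have hcards : S0.card = S1.card := by
    apply Finset.card_bij' (fun r _ => r + e) (fun r _ => r + e)
    · intro r hr
      simp only [hS0, Finset.mem_filter, Finset.mem_univ, true_and] at hr
      simp only [hS1, Finset.mem_filter, Finset.mem_univ, true_and, key r, hr]
      simp
    · intro r hr
      simp only [hS1, Finset.mem_filter, Finset.mem_univ, true_and] at hr
      have h1 : ∑ k, z k * r k = 1 := zmod2_ne_zero _ hr
      simp only [hS0, Finset.mem_filter, Finset.mem_univ, true_and, key r, h1]
      decide
    · intro r _; exact hinv r
    · intro r _; exact hinv r
  have htot : S0.card + S1.card = 2 ^ n := by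
    rw [hS0, hS1, Finset.card_filter_add_card_filter_not]
    simp [Finset.card_univ]
  rw [hcards] at htot
  have : 2 ^ n = 2 ^ (n - 1) * 2 := by
    rw [← pow_succ]; congr 1; omega
  omega

theorem checksum_collision_count (n l : ℕ) (hn : 0 < n) (hl : 0 < l)
    (x y : Fin n → ZMod 2) (hxy : x ≠ y) :
    (Finset.univ.filter
        (fun R : Fin l → (Fin n → ZMod 2) =>
          ∀ j : Fin l, ∑ k, x k * R j k = ∑ k, y k * R j k)).card
      = 2 ^ ((n - 1) * l) := by
  have hz : x - y ≠ 0 := sub_ne_zero.mpr hxy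
  have hiff : ∀ r : Fin n → ZMod 2,
      (∑ k, x k * r k = ∑ k, y k * r k) ↔ (∑ k, (x - y) k * r k = 0) := by
    intro r
    rw [← sub_eq_zero, ← Finset.sum_sub_distrib]
    simp [sub_mul]
  have heq : (Finset.univ.filter
        (fun R : Fin l → (Fin n → ZMod 2) =>
          ∀ j : Fin l, ∑ k, x k * R j k = ∑ k, y k * R j k))
      = Fintype.piFinset (fun _ : Fin l =>
          Finset.univ.filter (fun r : Fin n → ZMod 2 => ∑ k, (x - y) k * r k = 0)) := by
    ext R
    simp only [Fintype.mem_piFinset, Finset.mem_filter, Finset.mem_univ, true_and]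
    exact ⟨fun h j => (hiff (R j)).mp (h j), fun h j => (hiff (R j)).mpr (h j)⟩
  rw [heq, Fintype.card_piFinset]
  simp only [Finset.prod_const, Finset.card_univ, Fintype.card_fin]
  rw [single_count n hn (x - y) hz, ← pow_mul]
end

section
/- Fix a natural number n ≥ 1 and let X = (Fin n → ZMod 2). Suppose I is a finite index set and for each i ∈ I we are given sets A_i, B_i ⊆ X such that the rectangles A_i × B_i are pairwise disjoint, their union is all of X × X, and the equality predicate EQ(x, y) = (if x = y then 1 else 0) is constant on each rectangle A_i × B_i. Then |I| ≥ 2^n + 1. (This is the combinatorial core of the fooling-set lower bound showing that the deterministic communication complexity of the equality predicate EQ_n is at least n + 1.) -/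
theorem equality_fooling_set_lower_bound (n : ℕ) (hn : 1 ≤ n)
    (ι : Type) [Fintype ι]
    (A B : ι → Set (Fin n → ZMod 2))
    (hdisj : ∀ i j : ι, i ≠ j → Disjoint (A i ×ˢ B i) (A j ×ˢ B j))
    (hcover : (⋃ i : ι, A i ×ˢ B i) = Set.univ)
    (hconst : ∀ i : ι, ∀ x₁ y₁ x₂ y₂ : Fin n → ZMod 2,
      x₁ ∈ A i → y₁ ∈ B i → x₂ ∈ A i → y₂ ∈ B i →
        ((if x₁ = y₁ then (1 : ℕ) else 0) = if x₂ = y₂ then 1 else 0)) :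
    2 ^ n + 1 ≤ Fintype.card ι := by
  classical
  have key : ∀ p : (Fin n → ZMod 2) × (Fin n → ZMod 2), ∃ i, p ∈ A i ×ˢ B i := by
    intro p
    have : p ∈ ⋃ i : ι, A i ×ˢ B i := by rw [hcover]; trivial
    simpa using this
  choose F hF using key
  -- off-diagonal point
  set x0 : Fin n → ZMod 2 := fun _ => 0 with hx0
  set y0 : Fin n → ZMod 2 := fun _ => 1 with hy0
  have hne : x0 ≠ y0 := by
    intro h
    have := congrFun h ⟨0, hn⟩
    simp [hx0, hy0] at this
  -- the EQ-value trick
  have diag : ∀ i (x y : Fin n → ZMod 2), x ∈ A i → x ∈ B i → y ∈ A i → y ∈ B i → x = y := by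
    intro i x y hxA hxB hyA hyB
    by_contra hxy
    have := hconst i x x x y hxA hxB hxA hyB
    simp [hxy] at this
  have offd : ∀ i (x : Fin n → ZMod 2), x ∈ A i → x ∈ B i → x0 ∈ A i → y0 ∈ B i → False := by
    intro i x hxA hxB h0A h0B
    have := hconst i x x x0 y0 hxA hxB h0A h0B
    simp [hne] at this
  let g : Option (Fin n → ZMod 2) → ι := fun o => match o with
    | some x => F (x, x)
    | none => F (x0, y0)
  have hg : Function.Injective g := by
    intro a b hab
    match a, b with
    | some x, some y =>
      have hx := hF (x, x)
      have hy := hF (y, y)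
      simp only [g] at hab
      rw [hab] at hx
      have := diag (F (y, y)) x y hx.1 hx.2 hy.1 hy.2
      rw [this]
    | some x, none =>
      have hx := hF (x, x)
      have h0 := hF (x0, y0)
      simp only [g] at hab
      rw [hab] at hx
      exact (offd _ x hx.1 hx.2 h0.1 h0.2).elim
    | none, some y =>
      have hy := hF (y, y)
      have h0 := hF (x0, y0)
      simp only [g] at hab
      rw [← hab] at hy
      exact (offd _ y hy.1 hy.2 h0.1 h0.2).elim
    | none, none => rfl
  have hcard := Fintype.card_le_of_injective g hg
  have : Fintype.card (Option (Fin n → ZMod 2)) = 2 ^ n + 1 := by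
    simp [Fintype.card_option, Fintype.card_fun]
  omega
end

section
/- Let m be a natural number and let p be a real number with 0 ≤ p ≤ 1. Then ∑_{k = ⌈m/2⌉}^{m} (m choose k) · p^k · (1 − p)^(m − k) ≤ (4p)^(m/2), where the exponent m/2 is taken as a real exponent. (This is the binomial tail bound used to estimate the probability that at least half of m independent checksum tests, each erring with probability p, simultaneously fail.) -/
/-! For `k ≥ m / 2` the weight `p ^ k (1 - p) ^ (m - k)` is at most `p ^ (m / 2) = √p ^ m`, because
`p ≤ 1` and `1 - p ≤ 1`. Summing the binomial coefficients over all `k` then costs at most `2 ^ m`,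
and `2 ^ m √p ^ m = (4 p) ^ (m / 2)`. -/

open Finset

theorem rpow_natCast_div_two_eq_sqrt_pow {x : ℝ} (hx : 0 ≤ x) (m : ℕ) :
    x ^ ((m : ℝ) / 2) = √x ^ m := by
  rw [Real.sqrt_eq_rpow, ← Real.rpow_natCast, ← Real.rpow_mul hx]
  ring_nf

theorem pow_le_sqrt_pow_of_le_two_mul {p : ℝ} (hp0 : 0 ≤ p) (hp1 : p ≤ 1) {m k : ℕ}
    (h : m ≤ 2 * k) : p ^ k ≤ √p ^ m :=
  calc p ^ k = √p ^ (2 * k) := by rw [pow_mul, Real.sq_sqrt hp0]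
    _ ≤ √p ^ m := pow_le_pow_of_le_one (Real.sqrt_nonneg p) (Real.sqrt_le_one.mpr hp1) h

theorem sum_choose_mul_pow_le_two_pow_mul {p c : ℝ} (hp0 : 0 ≤ p) (hp1 : p ≤ 1) (hc0 : 0 ≤ c)
    {m : ℕ} {s : Finset ℕ} (hs : s ⊆ range (m + 1)) (hc : ∀ k ∈ s, p ^ k ≤ c) :
    ∑ k ∈ s, (m.choose k : ℝ) * p ^ k * (1 - p) ^ (m - k) ≤ 2 ^ m * c := by
  have term_le (k : ℕ) (hk : k ∈ s) :
      (m.choose k : ℝ) * p ^ k * (1 - p) ^ (m - k) ≤ m.choose k * c :=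
    calc (m.choose k : ℝ) * p ^ k * (1 - p) ^ (m - k) ≤ m.choose k * p ^ k :=
          mul_le_of_le_one_right (by positivity) (pow_le_one₀ (sub_nonneg.2 hp1) (by linarith))
      _ ≤ m.choose k * c := by gcongr; exact hc k hk
  calc ∑ k ∈ s, (m.choose k : ℝ) * p ^ k * (1 - p) ^ (m - k)
      ≤ ∑ k ∈ s, (m.choose k : ℝ) * c := sum_le_sum term_le
    _ ≤ ∑ k ∈ range (m + 1), (m.choose k : ℝ) * c :=
        sum_le_sum_of_subset_of_nonneg hs fun _ _ _ => by positivity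
    _ = 2 ^ m * c := by
        rw [← sum_mul, ← Nat.cast_sum, Nat.sum_range_choose]
        push_cast
        rfl

theorem binomial_tail_bound (m : ℕ) (p : ℝ) (hp0 : 0 ≤ p) (hp1 : p ≤ 1) :
    ∑ k ∈ (Finset.range (m + 1)).filter (fun k => m ≤ 2 * k),
        (m.choose k : ℝ) * p ^ k * (1 - p) ^ (m - k)
      ≤ (4 * p) ^ ((m : ℝ) / 2) := by
  have sqrt_four : √(4 : ℝ) = 2 := by
    rw [show (4 : ℝ) = 2 ^ 2 by norm_num, Real.sqrt_sq zero_le_two]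
  calc _ ≤ 2 ^ m * √p ^ m :=
        sum_choose_mul_pow_le_two_pow_mul hp0 hp1 (by positivity) (filter_subset _ _)
          fun k hk => pow_le_sqrt_pow_of_le_two_mul hp0 hp1 (mem_filter.1 hk).2
    _ = (4 * p) ^ ((m : ℝ) / 2) := by
        rw [rpow_natCast_div_two_eq_sqrt_pow (by positivity), Real.sqrt_mul zero_le_four,
          sqrt_four, mul_pow]
end

section
/- There exists a constant C > 0 such that for every natural number N ≥ 16, ∑_{i = 1}^{⌊log₂ log₂ N⌋} H₂(2^(−i)) · (2^i / log₂ N) · N ≤ C · N. (This is the paper's estimate that the total communication cost of the probabilistic synchronization stage, where step i exchanges checksums of length λ_i = 2^i / log₂ N per block over N blocks with a fraction at most 2^(−i) of differing blocks, is O(N).) -/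
/-!
Since `(1 - p) log (1 / (1 - p)) ≤ p`, we get `H₂(2⁻ⁱ) ≤ 2⁻ⁱ (i + 1 / ln 2)`, so the `i`-th term is
at most `(i + 2) N / log₂ N ≤ 2ⁱ⁺¹ N / log₂ N`. The geometric sum up to `⌊log₂ log₂ N⌋` is then
at most `4 · 2^⌊log₂ log₂ N⌋ ≤ 4 log₂ N`, so the total is at most `4 N`.
-/

open Real Finset

lemma mul_logb_one_div_add_eq_binEntropy_div_log (p : ℝ) :
    p * logb 2 (1 / p) + (1 - p) * logb 2 (1 / (1 - p)) = binEntropy p / log 2 := by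
  simp only [binEntropy, logb, one_div]
  ring

lemma binEntropy_le_mul_log_inv_add_self {p : ℝ} (hp : p < 1) :
    binEntropy p ≤ p * log p⁻¹ + p := by
  have h1p : 0 < 1 - p := sub_pos.2 hp
  have hlog := log_le_sub_one_of_pos (inv_pos.2 h1p)
  have h_one_sub : (1 - p) * log (1 - p)⁻¹ ≤ p := by
    calc (1 - p) * log (1 - p)⁻¹ ≤ (1 - p) * ((1 - p)⁻¹ - 1) := by gcongr
      _ = p := by field_simp; ring
  rw [binEntropy]
  linarith

lemma binEntropy_two_zpow_neg_div_log_mul_two_pow_le {i : ℕ} (hi : 1 ≤ i) :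
    binEntropy ((2 : ℝ) ^ (-(i : ℤ))) / log 2 * 2 ^ i ≤ i + 2 := by
  set p : ℝ := (2 : ℝ) ^ (-(i : ℤ))
  have hp_mul : p * 2 ^ i = 1 := by simp [p, zpow_neg]
  have hp_lt : p < 1 := zpow_lt_one_of_neg₀ one_lt_two (by omega)
  have hlog_inv : log p⁻¹ = i * log 2 := by simp [p, zpow_neg]
  have hlog2 : (log 2)⁻¹ ≤ 2 := by
    rw [inv_le_comm₀ (log_pos one_lt_two) two_pos]; linarith [log_two_gt_d9]
  calc binEntropy p / log 2 * 2 ^ i ≤ (p * log p⁻¹ + p) / log 2 * 2 ^ i := by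
        gcongr; exact binEntropy_le_mul_log_inv_add_self hp_lt
    _ = (i + (log 2)⁻¹) * (p * 2 ^ i) := by
        rw [hlog_inv]; field_simp
    _ = i + (log 2)⁻¹ := by rw [hp_mul, mul_one]
    _ ≤ i + 2 := by gcongr

lemma two_pow_natFloor_logb_le {L : ℝ} (hL : 1 ≤ L) : (2 : ℝ) ^ ⌊logb 2 L⌋₊ ≤ L := by
  rw [← rpow_natCast, ← le_logb_iff_rpow_le one_lt_two (by linarith)]
  exact Nat.floor_le (logb_nonneg one_lt_two hL)

lemma natCast_add_two_le_two_pow_succ (i : ℕ) : (i : ℝ) + 2 ≤ 2 ^ (i + 1) := by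
  exact_mod_cast Nat.lt_two_pow_self (n := i + 1)

lemma sum_Icc_two_pow_lt (M : ℕ) : ∑ i ∈ Icc 1 M, (2 : ℝ) ^ i < 2 ^ (M + 1) := by
  exact_mod_cast Nat.geomSum_lt le_rfl fun k hk => Nat.lt_succ_of_le (mem_Icc.1 hk).2

lemma sum_binEntropy_two_zpow_neg_mul_two_pow_le {L : ℝ} (hL : 1 ≤ L) :
    ∑ i ∈ Icc 1 ⌊logb 2 L⌋₊, binEntropy ((2 : ℝ) ^ (-(i : ℤ))) / log 2 * 2 ^ i ≤ 4 * L := by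
  set M := ⌊logb 2 L⌋₊
  calc ∑ i ∈ Icc 1 M, binEntropy ((2 : ℝ) ^ (-(i : ℤ))) / log 2 * 2 ^ i
      ≤ ∑ i ∈ Icc 1 M, (2 : ℝ) * 2 ^ i := by
        refine sum_le_sum fun i hi => ?_
        rw [← pow_succ']
        exact (binEntropy_two_zpow_neg_div_log_mul_two_pow_le (mem_Icc.1 hi).1).trans
          (natCast_add_two_le_two_pow_succ i)
    _ = 2 * ∑ i ∈ Icc 1 M, (2 : ℝ) ^ i := (mul_sum ..).symm
    _ ≤ 2 * 2 ^ (M + 1) := by gcongr; exact (sum_Icc_two_pow_lt M).le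
    _ = 4 * 2 ^ M := by ring
    _ ≤ 4 * L := by gcongr; exact two_pow_natFloor_logb_le hL

theorem probabilistic_stage_cost :
    ∃ C : ℝ, 0 < C ∧ ∀ N : ℕ, 16 ≤ N →
      ∑ i ∈ Finset.Icc 1 ⌊Real.logb 2 (Real.logb 2 N)⌋₊,
          (((2 : ℝ) ^ (-(i : ℤ)) * Real.logb 2 (1 / (2 : ℝ) ^ (-(i : ℤ)))
            + (1 - (2 : ℝ) ^ (-(i : ℤ))) *
                Real.logb 2 (1 / (1 - (2 : ℝ) ^ (-(i : ℤ)))))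
           * ((2 : ℝ) ^ i / Real.logb 2 N) * N)
        ≤ C * N := by
  refine ⟨4, four_pos, fun N hN => ?_⟩
  set L := logb 2 (N : ℝ)
  have hL : 1 ≤ L := by
    rw [le_logb_iff_rpow_le one_lt_two (by positivity), rpow_one]
    exact_mod_cast (show 2 ≤ N by omega)
  simp only [mul_logb_one_div_add_eq_binEntropy_div_log]
  calc ∑ i ∈ Icc 1 ⌊logb 2 L⌋₊, binEntropy ((2 : ℝ) ^ (-(i : ℤ))) / log 2 * (2 ^ i / L) * N
      = (∑ i ∈ Icc 1 ⌊logb 2 L⌋₊, binEntropy ((2 : ℝ) ^ (-(i : ℤ))) / log 2 * 2 ^ i) * (N / L) := by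
        rw [sum_mul]; congr! 1 with i; ring
    _ ≤ 4 * L * (N / L) := by gcongr; exact sum_binEntropy_two_zpow_neg_mul_two_pow_le hL
    _ = 4 * N := by field_simp
end
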